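/- arXiv:math/0605061 — 4 statements merged into one kernel-verified Lean document; each statement's English description precedes it below -/
import Mathlib

section
/- If u is a packed word of length p with maximum letter m, and v is a packed word of length q, then every word in the shuffle of u and v[m] (the word v with all letters shifted up by m) is a packed word of length p+q with maximum letter m + max(v). -/
/-- The maximum letter of a word (0 for the empty word). -/
def maxL (w : List ℕ) : ℕ := w.foldr max 0

/-- A word over the positive integers is packed if its set of letters is
`{1, …, m}` for some `m`. -/
def IsPacked (w : List ℕ) : Prop := ∀ x ∈ w, 1 ≤ x ∧ ∀ i, 1 ≤ i → i ≤ x → i ∈ w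

/-- The packed word of `w`: replace the distinct letters `b₁ < … < b_r` of `w`
by `1, …, r`. -/
def pack (w : List ℕ) : List ℕ :=
  w.map (fun x => (w.toFinset.sort (· ≤ ·)).idxOf x + 1)

/-- Stirling numbers of the second kind. -/
def stirling2 : ℕ → ℕ → ℕ
  | 0, 0 => 1
  | 0, _ + 1 => 0
  | _ + 1, 0 => 0
  | n + 1, k + 1 => (k + 1) * stirling2 n (k + 1) + stirling2 n k

/-- An ordered set partition of `{1, …, n}`: a sequence of nonempty pairwise
disjoint subsets whose union is `{1, …, n}`. -/
def IsOSP (n : ℕ) (P : List (Finset ℕ)) : Prop :=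
  (∀ B ∈ P, B.Nonempty) ∧ P.Pairwise Disjoint ∧ P.foldr (· ∪ ·) ∅ = Finset.Icc 1 n

/-- `IsShuffle u v w` holds when `w` is an interleaving of `u` and `v`. -/
inductive IsShuffle : List ℕ → List ℕ → List ℕ → Prop
  | nil : IsShuffle [] [] []
  | left (x : ℕ) (u v w : List ℕ) : IsShuffle u v w → IsShuffle (x :: u) v (x :: w)
  | right (x : ℕ) (u v w : List ℕ) : IsShuffle u v w → IsShuffle u (x :: v) (x :: w)

lemma maxL_cons (a : ℕ) (l : List ℕ) : maxL (a :: l) = max a (maxL l) := rfl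

lemma le_maxL {x : ℕ} {l : List ℕ} (h : x ∈ l) : x ≤ maxL l := by
  induction l with
  | nil => cases h
  | cons a t ih =>
    rcases List.mem_cons.mp h with rfl | h
    · simp [maxL_cons, le_max_iff]
    · simp [maxL_cons, le_max_iff, ih h]

lemma maxL_mem_or_zero (l : List ℕ) : maxL l ∈ l ∨ maxL l = 0 := by
  induction l with
  | nil => right; rfl
  | cons a t ih =>
    rw [maxL_cons]
    rcases le_total a (maxL t) with h | h
    · rw [max_eq_right h]
      rcases ih with h' | h'
      · exact Or.inl (List.mem_cons_of_mem _ h')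
      · exact Or.inr h'
    · rw [max_eq_left h]; exact Or.inl List.mem_cons_self

lemma maxL_append (l l' : List ℕ) : maxL (l ++ l') = max (maxL l) (maxL l') := by
  induction l with
  | nil => simp [maxL]
  | cons a t ih => simp [maxL_cons, ih, max_assoc]

lemma maxL_perm {l l' : List ℕ} (h : l.Perm l') : maxL l = maxL l' := by
  induction h with
  | nil => rfl
  | cons a _ ih => simp [maxL_cons, ih]
  | swap a b t => simp [maxL_cons, max_left_comm]
  | trans _ _ ih1 ih2 => exact ih1.trans ih2

lemma maxL_map_add (m : ℕ) {v : List ℕ} (hv : v ≠ []) :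
    maxL (v.map (· + m)) = maxL v + m := by
  induction v with
  | nil => exact absurd rfl hv
  | cons a t ih =>
    rcases eq_or_ne t [] with rfl | ht
    · simp [maxL]
    · simp only [List.map_cons, maxL_cons, ih ht]
      rw [max_add_add_right]

lemma IsShuffle.perm {u v w : List ℕ} (h : IsShuffle u v w) : w.Perm (u ++ v) := by
  induction h with
  | nil => exact List.Perm.refl _
  | left x u v w _ ih => exact ih.cons x
  | right x u v w _ ih => exact (ih.cons x).trans List.perm_middle.symm

/-- Every word in the shifted shuffle of a packed word `u` (with maximum `m`)
and a packed word `v` shifted by `m` is packed, of length `|u| + |v|`, with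
maximum letter `m + max v`. -/
theorem shifted_shuffle_packed (u v w : List ℕ)
    (hu : IsPacked u) (hv : IsPacked v)
    (h : IsShuffle u (v.map (· + maxL u)) w) :
    IsPacked w ∧ w.length = u.length + v.length ∧ maxL w = maxL u + maxL v := by
  have hperm := h.perm
  have hmem : ∀ x, x ∈ w ↔ x ∈ u ∨ ∃ y ∈ v, y + maxL u = x := by
    intro x
    rw [hperm.mem_iff, List.mem_append, List.mem_map]
  refine ⟨?_, ?_, ?_⟩
  · intro x hx
    rcases (hmem x).mp hx with hxu | ⟨y, hyv, rfl⟩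
    · obtain ⟨h1, h2⟩ := hu x hxu
      exact ⟨h1, fun i hi1 hi2 => (hmem i).mpr (Or.inl (h2 i hi1 hi2))⟩
    · obtain ⟨h1, h2⟩ := hv y hyv
      refine ⟨by omega, fun i hi1 hi2 => ?_⟩
      rcases le_or_gt i (maxL u) with hile | hgt
      · -- i ≤ maxL u : use that maxL u ∈ u (since i ≥ 1 forces maxL u ≥ 1)
        have hm1 : 1 ≤ maxL u := le_trans hi1 hile
        rcases maxL_mem_or_zero u with hmm | hmm
        · obtain ⟨_, h2u⟩ := hu _ hmm
          exact (hmem i).mpr (Or.inl (h2u i hi1 hile))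
        · omega
      · have : i - maxL u ∈ v := h2 (i - maxL u) (by omega) (by omega)
        exact (hmem i).mpr (Or.inr ⟨i - maxL u, this, by omega⟩)
  · rw [hperm.length_eq, List.length_append, List.length_map]
  · rw [maxL_perm hperm, maxL_append]
    rcases eq_or_ne v [] with rfl | hv0
    · simp [maxL]
    · rw [maxL_map_add _ hv0]
      omega
end

section
/- In the pseudo-permutohedron order on packed words of length n, the set of packed words of length p+q whose prefix of length p packs to u' and whose suffix of length q packs to u'' is exactly the interval [u'·u''[max(u')], u'[max(u'')]·u'']. -/
/-- The inversion value of a pair of positions `(a, b)` of a word, doubled to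
stay in the integers: `2` if `w_a > w_b`, `1` if `w_a = w_b`, `0` if
`w_a < w_b`. -/
def invval (w : List ℕ) (a b : ℕ) : ℕ :=
  if w.getD b 0 < w.getD a 0 then 2 else if w.getD a 0 = w.getD b 0 then 1 else 0

/-- The pseudo-permutohedron order: `u ⪯ v` iff every inversion value of `u`
is at most the corresponding inversion value of `v`. -/
def ple (n : ℕ) (u v : List ℕ) : Prop :=
  ∀ a b, a < b → b < n → invval u a b ≤ invval v a b

namespace ConvAux

lemma invval_le_two (w : List ℕ) (a b : ℕ) : invval w a b ≤ 2 := by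
  unfold invval; split_ifs <;> omega

lemma invval_eq_of {u v : List ℕ} {a b c d : ℕ}
    (h1 : u.getD b 0 < u.getD a 0 ↔ v.getD d 0 < v.getD c 0)
    (h2 : u.getD a 0 = u.getD b 0 ↔ v.getD c 0 = v.getD d 0) :
    invval u a b = invval v c d := by
  unfold invval; split_ifs <;> tauto

lemma le_maxL {w : List ℕ} {x : ℕ} (h : x ∈ w) : x ≤ maxL w := by
  induction w with
  | nil => cases h
  | cons y t ih =>
    rcases List.mem_cons.1 h with rfl | h
    · exact le_max_left _ _
    · exact le_trans (ih h) (le_max_right _ _)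

lemma length_pack (w : List ℕ) : (pack w).length = w.length := by simp [pack]

lemma indexOf_lt_indexOf {l : List ℕ} (hl : l.Pairwise (· < ·)) {x y : ℕ}
    (hx : x ∈ l) (hy : y ∈ l) (hxy : x < y) : l.idxOf x < l.idxOf y := by
  have hix := List.idxOf_lt_length_iff.2 hx
  have hiy := List.idxOf_lt_length_iff.2 hy
  by_contra hc
  push_neg at hc
  rcases lt_or_eq_of_le hc with h | h
  · have h2 : y < x := by
      have := hl.sortedLT.strictMono_get (show (⟨_, hiy⟩ : Fin l.length) < ⟨_, hix⟩ from h)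
      simpa using this
    omega
  · have : y = x := (List.idxOf_inj hy).1 h
    omega

lemma indexOf_lt_iff {l : List ℕ} (hl : l.Pairwise (· < ·)) {x y : ℕ}
    (hx : x ∈ l) (hy : y ∈ l) : l.idxOf x < l.idxOf y ↔ x < y := by
  constructor
  · intro h
    rcases lt_trichotomy x y with h' | rfl | h'
    · exact h'
    · omega
    · exact absurd (indexOf_lt_indexOf hl hy hx h') (by omega)
  · exact indexOf_lt_indexOf hl hx hy

lemma indexOf_eq_iff {l : List ℕ} (hl : l.Pairwise (· < ·)) {x y : ℕ}
    (hx : x ∈ l) (hy : y ∈ l) : l.idxOf x = l.idxOf y ↔ x = y := by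
  constructor
  · intro h
    rcases lt_trichotomy x y with h' | h' | h'
    · exact absurd (indexOf_lt_indexOf hl hx hy h') (by omega)
    · exact h'
    · exact absurd (indexOf_lt_indexOf hl hy hx h') (by omega)
  · rintro rfl; rfl

lemma pack_getD {w : List ℕ} {a : ℕ} (ha : a < w.length) :
    (pack w).getD a 0 = (w.toFinset.sort (· ≤ ·)).idxOf (w.getD a 0) + 1 := by
  rw [List.getD_eq_getElem _ _ (by rw [length_pack]; exact ha), List.getD_eq_getElem _ _ ha]
  simp [pack]

lemma getD_mem {w : List ℕ} {a : ℕ} (ha : a < w.length) : w.getD a 0 ∈ w := by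
  rw [List.getD_eq_getElem _ _ ha]; exact List.getElem_mem ha

lemma invval_pack (w : List ℕ) {a b : ℕ} (ha : a < w.length) (hb : b < w.length) :
    invval (pack w) a b = invval w a b := by
  have hma : w.getD a 0 ∈ w.toFinset.sort (· ≤ ·) := by
    rw [Finset.mem_sort, List.mem_toFinset]; exact getD_mem ha
  have hmb : w.getD b 0 ∈ w.toFinset.sort (· ≤ ·) := by
    rw [Finset.mem_sort, List.mem_toFinset]; exact getD_mem hb
  have hs := (Finset.sortedLT_sort w.toFinset).pairwise
  apply invval_eq_of
  · rw [pack_getD ha, pack_getD hb]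
    simp only [add_lt_add_iff_right]
    exact (indexOf_lt_iff hs hmb hma)
  · rw [pack_getD ha, pack_getD hb]
    simp only [add_left_inj]
    exact (indexOf_eq_iff hs hma hmb)

lemma pack_isPacked (w : List ℕ) : IsPacked (pack w) := by
  intro x hx
  simp only [pack, List.mem_map] at hx
  obtain ⟨y, hy, rfl⟩ := hx
  refine ⟨by omega, fun i hi1 hi2 => ?_⟩
  set l := w.toFinset.sort (· ≤ ·) with hl
  have hyl : y ∈ l := by rw [hl, Finset.mem_sort, List.mem_toFinset]; exact hy
  have hidx : l.idxOf y < l.length := List.idxOf_lt_length_iff.2 hyl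
  have hil : i - 1 < l.length := by omega
  have hmem : l[i-1] ∈ w := by
    have h3 := List.getElem_mem hil
    exact List.mem_toFinset.1 ((Finset.mem_sort _).1 h3)
  have : l.idxOf l[i-1] = i - 1 := List.get_idxOf (Finset.sort_nodup _ _) ⟨_, hil⟩
  simp only [pack, List.mem_map]
  exact ⟨l[i-1], hmem, by rw [← hl, this]; omega⟩

lemma lt_of_pat {u v : List ℕ} (hlen : u.length = v.length)
    (hpat : ∀ a b, a < b → b < u.length → invval u a b = invval v a b)
    {i j : ℕ} (hi : i < u.length) (hj : j < u.length)
    (h : u.getD j 0 < u.getD i 0) : v.getD j 0 < v.getD i 0 := by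
  rcases lt_trichotomy i j with hij | rfl | hij
  · have := hpat i j hij hj
    unfold invval at this
    split_ifs at this <;> omega
  · omega
  · have := hpat j i hij hi
    unfold invval at this
    split_ifs at this <;> omega

lemma le_aux {u v : List ℕ} (hu : IsPacked u) (hv : IsPacked v)
    (hlen : u.length = v.length)
    (hlt : ∀ i j, i < u.length → j < u.length →
      u.getD j 0 < u.getD i 0 → v.getD j 0 < v.getD i 0) :
    ∀ i, i < u.length → u.getD i 0 ≤ v.getD i 0 := by
  suffices h : ∀ m i, i < u.length → u.getD i 0 = m → m ≤ v.getD i 0 by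
    intro i hi; exact h _ i hi rfl
  intro m
  induction m using Nat.strong_induction_on with
  | _ m ih =>
    intro i hi hm
    match m with
    | 0 => omega
    | 1 =>
      have : v.getD i 0 ∈ v := getD_mem (by omega)
      exact (hv _ this).1
    | k + 2 =>
      have hmem : (k + 2) ∈ u := hm ▸ getD_mem hi
      have hk : (k + 1) ∈ u := (hu _ hmem).2 _ (by omega) (by omega)
      obtain ⟨j, hj, hje⟩ := List.getElem_of_mem hk
      have hjD : u.getD j 0 = k + 1 := by rw [List.getD_eq_getElem _ _ hj, hje]
      have h1 : v.getD j 0 < v.getD i 0 := hlt i j hi hj (by omega)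
      have h2 : k + 1 ≤ v.getD j 0 := ih (k+1) (by omega) j hj hjD
      omega

lemma eq_of_pattern {u v : List ℕ} (hu : IsPacked u) (hv : IsPacked v)
    (hlen : u.length = v.length)
    (hpat : ∀ a b, a < b → b < u.length → invval u a b = invval v a b) : u = v := by
  have hpat' : ∀ a b, a < b → b < v.length → invval v a b = invval u a b := by
    intro a b h1 h2; exact (hpat a b h1 (hlen ▸ h2)).symm
  have h1 := le_aux hu hv hlen (fun i j hi hj => lt_of_pat hlen hpat hi hj)
  have h2 := le_aux hv hu hlen.symm
    (fun i j hi hj => lt_of_pat hlen.symm hpat' hi hj)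
  apply List.ext_getElem hlen
  intro n hn1 hn2
  have e1 := h1 n hn1
  have e2 := h2 n (hlen ▸ hn1)
  rw [List.getD_eq_getElem _ _ hn1, List.getD_eq_getElem _ _ hn2] at e1 e2
  omega

lemma pack_eq_iff {u : List ℕ} (hu : IsPacked u) (v : List ℕ) :
    pack v = u ↔ v.length = u.length ∧
      ∀ a b, a < b → b < u.length → invval v a b = invval u a b := by
  constructor
  · rintro rfl
    refine ⟨(length_pack v).symm, fun a b hab hb => ?_⟩
    rw [length_pack] at hb
    exact (invval_pack v (by omega) hb).symm
  · rintro ⟨hl, hp⟩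
    apply eq_of_pattern (pack_isPacked v) hu (by rw [length_pack, hl])
    intro a b hab hb
    rw [length_pack, hl] at hb
    rw [invval_pack v (by omega) (by omega)]
    exact hp a b hab hb

end ConvAux

namespace ConvAux

lemma getD_take {w : List ℕ} {p a : ℕ} (h : a < p) :
    (w.take p).getD a 0 = w.getD a 0 := by
  by_cases ha : a < w.length
  · rw [List.getD_eq_getElem _ _ (by rw [List.length_take]; omega),
      List.getD_eq_getElem _ _ ha, List.getElem_take]
  · rw [List.getD_eq_default _ _ (by rw [List.length_take]; omega),
      List.getD_eq_default _ _ (by omega)]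

lemma getD_drop (w : List ℕ) (p a : ℕ) :
    (w.drop p).getD a 0 = w.getD (p + a) 0 := by
  by_cases h : p + a < w.length
  · rw [List.getD_eq_getElem _ _ (by rw [List.length_drop]; omega),
      List.getD_eq_getElem _ _ h, List.getElem_drop]
  · rw [List.getD_eq_default _ _ (by rw [List.length_drop]; omega),
      List.getD_eq_default _ _ (by omega)]

lemma invval_take {w : List ℕ} {p a b : ℕ} (ha : a < p) (hb : b < p) :
    invval (w.take p) a b = invval w a b := by
  apply invval_eq_of <;> rw [getD_take ha, getD_take hb]

lemma invval_drop (w : List ℕ) (p a b : ℕ) :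
    invval (w.drop p) a b = invval w (p + a) (p + b) := by
  apply invval_eq_of <;> rw [getD_drop, getD_drop]

lemma getD_append_map_right (u' u'' : List ℕ) (c : ℕ) {b : ℕ} (hb : b < u''.length) :
    (u' ++ u''.map (· + c)).getD (u'.length + b) 0 = u''.getD b 0 + c := by
  rw [List.getD_append_right _ _ _ _ (by omega)]
  have h1 : u'.length + b - u'.length = b := by omega
  rw [h1, List.getD_eq_getElem _ _ (by rw [List.length_map]; exact hb),
    List.getElem_map, List.getD_eq_getElem _ _ hb]

lemma getD_map_left (u' u'' : List ℕ) (c : ℕ) {a : ℕ} (ha : a < u'.length) :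
    (u'.map (· + c) ++ u'').getD a 0 = u'.getD a 0 + c := by
  rw [List.getD_append _ _ _ _ (by rw [List.length_map]; exact ha),
    List.getD_eq_getElem _ _ (by rw [List.length_map]; exact ha),
    List.getElem_map, List.getD_eq_getElem _ _ ha]

lemma invval_L_pre (u' u'' : List ℕ) {a b : ℕ} (ha : a < u'.length) (hb : b < u'.length) :
    invval (u' ++ u''.map (· + maxL u')) a b = invval u' a b := by
  apply invval_eq_of <;>
    rw [List.getD_append _ _ _ _ ha, List.getD_append _ _ _ _ hb]

lemma invval_L_suf (u' u'' : List ℕ) {a b : ℕ} (ha : a < u''.length) (hb : b < u''.length) :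
    invval (u' ++ u''.map (· + maxL u')) (u'.length + a) (u'.length + b) = invval u'' a b := by
  apply invval_eq_of <;>
    · rw [getD_append_map_right u' u'' _ ha, getD_append_map_right u' u'' _ hb]
      omega

lemma invval_L_cross (u' u'' : List ℕ) (h'' : IsPacked u'')
    {a b : ℕ} (ha : a < u'.length) (hb : b < u''.length) :
    invval (u' ++ u''.map (· + maxL u')) a (u'.length + b) = 0 := by
  have e1 : (u' ++ u''.map (· + maxL u')).getD a 0 = u'.getD a 0 :=
    List.getD_append _ _ _ _ ha
  have e2 := getD_append_map_right u' u'' (maxL u') hb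
  have h1 : u'.getD a 0 ≤ maxL u' := le_maxL (getD_mem ha)
  have h2 : 1 ≤ u''.getD b 0 := (h'' _ (getD_mem hb)).1
  unfold invval
  rw [e1, e2, if_neg (by omega), if_neg (by omega)]

lemma invval_U_pre (u' u'' : List ℕ) {a b : ℕ} (ha : a < u'.length) (hb : b < u'.length) :
    invval (u'.map (· + maxL u'') ++ u'') a b = invval u' a b := by
  apply invval_eq_of <;>
    · rw [getD_map_left u' u'' _ ha, getD_map_left u' u'' _ hb]
      omega

lemma invval_U_suf (u' u'' : List ℕ) {a b : ℕ} (ha : a < u''.length) (hb : b < u''.length) :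
    invval (u'.map (· + maxL u'') ++ u'') (u'.length + a) (u'.length + b) = invval u'' a b := by
  have hl : (u'.map (· + maxL u'')).length = u'.length := List.length_map _
  apply invval_eq_of <;>
    rw [List.getD_append_right _ _ _ _ (by omega), List.getD_append_right _ _ _ _ (by omega),
      hl, Nat.add_sub_cancel_left, Nat.add_sub_cancel_left]

lemma invval_U_cross (u' u'' : List ℕ) (h' : IsPacked u')
    {a b : ℕ} (ha : a < u'.length) (hb : b < u''.length) :
    invval (u'.map (· + maxL u'') ++ u'') a (u'.length + b) = 2 := by
  have hl : (u'.map (· + maxL u'')).length = u'.length := List.length_map _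
  have e1 := getD_map_left u' u'' (maxL u'') ha
  have e2 : (u'.map (· + maxL u'') ++ u'').getD (u'.length + b) 0 = u''.getD b 0 := by
    rw [List.getD_append_right _ _ _ _ (by omega), hl, Nat.add_sub_cancel_left]
  have h1 : u''.getD b 0 ≤ maxL u'' := le_maxL (getD_mem hb)
  have h2 : 1 ≤ u'.getD a 0 := (h' _ (getD_mem ha)).1
  unfold invval
  rw [e1, e2, if_pos (by omega)]

end ConvAux

open ConvAux

/-- In the pseudo-permutohedron order, the set of packed words of length
`p + q` whose prefix of length `p` packs to `u'` and whose suffix packs to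
`u''` is exactly the interval `[u'·u''[max u'], u'[max u'']·u'']`. -/
theorem convolution_is_interval (u' u'' : List ℕ)
    (h' : IsPacked u') (h'' : IsPacked u'') (w : List ℕ) :
    (IsPacked w ∧ w.length = u'.length + u''.length ∧
        pack (w.take u'.length) = u' ∧ pack (w.drop u'.length) = u'') ↔
    (IsPacked w ∧ w.length = u'.length + u''.length ∧
        ple (u'.length + u''.length) (u' ++ u''.map (· + maxL u')) w ∧
        ple (u'.length + u''.length) w (u'.map (· + maxL u'') ++ u'')) := by
  constructor
  · rintro ⟨hw, hlen, hpre, hsuf⟩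
    obtain ⟨hl1, hp1⟩ := (pack_eq_iff h' _).1 hpre
    obtain ⟨hl2, hp2⟩ := (pack_eq_iff h'' _).1 hsuf
    refine ⟨hw, hlen, ?_, ?_⟩
    · intro a b hab hb
      by_cases hbp : b < u'.length
      · rw [invval_L_pre u' u'' (by omega) hbp, ← hp1 a b hab hbp,
          invval_take (by omega) hbp]
      · by_cases hap : a < u'.length
        · have hb' : b - u'.length < u''.length := by omega
          have hbe : u'.length + (b - u'.length) = b := by omega
          have e := invval_L_cross u' u'' h'' hap hb'
          rw [hbe] at e
          rw [e]; exact Nat.zero_le _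
        · have ha' : a - u'.length < u''.length := by omega
          have hb' : b - u'.length < u''.length := by omega
          have hae : u'.length + (a - u'.length) = a := by omega
          have hbe : u'.length + (b - u'.length) = b := by omega
          have e := invval_L_suf u' u'' ha' hb'
          rw [hae, hbe] at e
          rw [e, ← hp2 _ _ (by omega) hb', invval_drop, hae, hbe]
    · intro a b hab hb
      by_cases hbp : b < u'.length
      · rw [invval_U_pre u' u'' (by omega) hbp, ← hp1 a b hab hbp,
          invval_take (by omega) hbp]
      · by_cases hap : a < u'.length
        · have hb' : b - u'.length < u''.length := by omega
          have hbe : u'.length + (b - u'.length) = b := by omega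
          have e := invval_U_cross u' u'' h' hap hb'
          rw [hbe] at e
          rw [e]; exact invval_le_two w a b
        · have ha' : a - u'.length < u''.length := by omega
          have hb' : b - u'.length < u''.length := by omega
          have hae : u'.length + (a - u'.length) = a := by omega
          have hbe : u'.length + (b - u'.length) = b := by omega
          have e := invval_U_suf u' u'' ha' hb'
          rw [hae, hbe] at e
          rw [e, ← hp2 _ _ (by omega) hb', invval_drop, hae, hbe]
  · rintro ⟨hw, hlen, hL, hU⟩
    refine ⟨hw, hlen, ?_, ?_⟩
    · rw [pack_eq_iff h']
      refine ⟨by rw [List.length_take, hlen]; omega, ?_⟩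
      intro a b hab hb
      rw [invval_take (by omega) hb]
      have e1 := invval_L_pre u' u'' (show a < u'.length by omega) hb
      have e2 := invval_U_pre u' u'' (show a < u'.length by omega) hb
      have g1 := hL a b hab (by omega)
      have g2 := hU a b hab (by omega)
      omega
    · rw [pack_eq_iff h'']
      refine ⟨by rw [List.length_drop, hlen]; omega, ?_⟩
      intro a b hab hb
      rw [invval_drop]
      have e1 := invval_L_suf u' u'' (show a < u''.length by omega) hb
      have e2 := invval_U_suf u' u'' (show a < u''.length by omega) hb
      have g1 := hL (u'.length + a) (u'.length + b) (by omega) (by omega)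
      have g2 := hU (u'.length + a) (u'.length + b) (by omega) (by omega)
      omega
end

section
/- The number of generators in degree n of the free associative algebra structure underlying WQSym, i.e., the coefficients g_n defined by Σ g_n t^n = 1 − 1/OB(t) where OB(t) = Σ_{n≥0} b_n t^n is the ordered Bell generating series, are nonnegative integers for all n. Equivalently: the sequence (b_n) of ordered Bell numbers satisfies that the coefficients of 1 − OB(t)^{−1} are nonnegative. -/
namespace FG


lemma le_maxL {w : List ℕ} {x : ℕ} (h : x ∈ w) : x ≤ maxL w := by
  induction w with
  | nil => simp at h
  | cons a l ih =>
    rcases List.mem_cons.mp h with rfl | h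
    · exact le_max_left _ _
    · exact le_trans (ih h) (le_max_right _ _)

lemma maxL_lt {w : List ℕ} {x : ℕ} (hx : 0 < x) (h : ∀ a ∈ w, a < x) : maxL w < x := by
  induction w with
  | nil => simpa [maxL]
  | cons a l ih =>
    simp only [maxL, List.foldr_cons] at *
    exact max_lt (h a (by simp)) (ih fun b hb => h b (by simp [hb]))

lemma maxL_mem {w : List ℕ} (hne : w ≠ []) : maxL w ∈ w := by
  induction w with
  | nil => simp at hne
  | cons a l ih =>
    show max a (maxL l) ∈ a :: l
    rcases le_total (maxL l) a with h | h
    · simp [max_eq_left h]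
    · rw [max_eq_right h]
      rcases eq_or_ne l [] with rfl | hl
      · simp only [maxL, List.foldr_nil] at h
        simp [maxL, show a = 0 by omega]
      · exact List.mem_cons_of_mem _ (ih hl)

/-- letters of a packed word are bounded by its length -/
lemma packed_le_length {w : List ℕ} (hp : IsPacked w) {x : ℕ} (hx : x ∈ w) :
    x ≤ w.length := by
  have hsub : Finset.Icc 1 x ⊆ w.toFinset := by
    intro i hi
    rw [Finset.mem_Icc] at hi
    exact List.mem_toFinset.mpr ((hp x hx).2 i hi.1 hi.2)
  calc x = (Finset.Icc 1 x).card := by simp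
    _ ≤ w.toFinset.card := Finset.card_le_card hsub
    _ ≤ w.length := w.toFinset_card_le


instance finitePW (n : ℕ) : Finite {w : List ℕ // w.length = n ∧ IsPacked w} := by
  let f : {w : List ℕ // w.length = n ∧ IsPacked w} → List.Vector (Fin (n+1)) n :=
    fun w => ⟨w.1.pmap (fun x h => (⟨x, h⟩ : Fin (n+1)))
      (fun x hx => by
        have := packed_le_length w.2.2 hx
        omega), by simp [w.2.1]⟩
  have hf : Function.Injective f := by
    intro v w h
    have h1 : (f v).1.map Fin.val = (f w).1.map Fin.val := by rw [h]
    simp only [f, List.map_pmap] at h1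
    ext1
    simpa using h1
  exact Finite.of_injective f hf

def Splits (w : List ℕ) (s : ℕ) : Prop := ∀ x ∈ w.take s, ∀ y ∈ w.drop s, x < y

def Irr (w : List ℕ) : Prop := ∀ s, 1 ≤ s → s < w.length → ¬ Splits w s

lemma splits_length (w : List ℕ) {s : ℕ} (h : w.length ≤ s) : Splits w s := by
  intro x _ y hy
  rw [List.drop_eq_nil_of_le h] at hy
  simp at hy

lemma splits_take_iff {w : List ℕ} {k s : ℕ} (hs : s ≤ k) (hk : k ≤ w.length)
    (hsp : Splits w k) : Splits w s ↔ Splits (w.take k) s := by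
  have htt : (w.take k).take s = w.take s := by
    rw [List.take_take, min_eq_left hs]
  constructor
  · intro h x hx y hy
    refine h x (htt ▸ hx) y ?_
    rw [List.drop_take] at hy
    exact List.take_subset _ _ hy
  · intro h x hx y hy
    have hw : w.drop s = (w.take k).drop s ++ w.drop k := by
      conv_lhs => rw [← List.take_append_drop k w]
      rw [List.drop_append_of_le_length (by simp [min_eq_left hk, hs])]
    rw [hw, List.mem_append] at hy
    rcases hy with hy | hy
    · exact h x (htt ▸ hx) y hy
    · exact hsp x (by
        have : w.take s ⊆ w.take k := htt ▸ List.take_subset _ _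
        exact this hx) y hy


lemma packed_take {w : List ℕ} {k : ℕ} (hw : IsPacked w) (hsp : Splits w k) :
    IsPacked (w.take k) := by
  intro x hx
  have hxw : x ∈ w := List.take_subset _ _ hx
  refine ⟨(hw x hxw).1, fun i hi1 hix => ?_⟩
  have hiw : i ∈ w := (hw x hxw).2 i hi1 hix
  rcases List.mem_append.mp ((List.take_append_drop k w).symm ▸ hiw) with h | h
  · exact h
  · exact absurd (hsp x hx i h) (by omega)

lemma lt_of_mem_drop {w : List ℕ} {k x : ℕ} (hw : IsPacked w) (hsp : Splits w k)
    (hx : x ∈ w.drop k) : maxL (w.take k) < x :=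
  maxL_lt ((hw x (List.drop_subset _ _ hx)).1) (fun a ha => hsp a ha x hx)

lemma packed_drop {w : List ℕ} {k : ℕ} (hw : IsPacked w) (hsp : Splits w k) :
    IsPacked ((w.drop k).map (· - maxL (w.take k))) := by
  set j := maxL (w.take k) with hj
  intro y hy
  rcases List.mem_map.mp hy with ⟨x, hx, rfl⟩
  have hjx : j < x := lt_of_mem_drop hw hsp hx
  refine ⟨by omega, fun i hi1 hiy => ?_⟩
  have hixj : i + j ≤ x := by omega
  have hiw : i + j ∈ w := (hw x (List.drop_subset _ _ hx)).2 (i + j) (by omega) hixj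
  have hid : i + j ∈ w.drop k := by
    rcases List.mem_append.mp ((List.take_append_drop k w).symm ▸ hiw) with h | h
    · exact absurd (le_maxL h) (by omega)
    · exact h
  exact List.mem_map.mpr ⟨i + j, hid, by omega⟩

lemma recompose {w : List ℕ} {k : ℕ} (hw : IsPacked w) (hsp : Splits w k) :
    w.take k ++ ((w.drop k).map (· - maxL (w.take k))).map (· + maxL (w.take k)) = w := by
  set j := maxL (w.take k) with hj
  have h2 : ((w.drop k).map (· - j)).map (· + j) = w.drop k := by
    rw [List.map_map]
    apply (List.map_congr_left ?_).trans (List.map_id _)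
    intro x hx
    have := lt_of_mem_drop hw hsp hx
    simp only [Function.comp_apply, id]
    omega
  rw [h2, List.take_append_drop]

lemma packed_append {u v : List ℕ} (hu : IsPacked u) (hv : IsPacked v) (hne : u ≠ []) :
    IsPacked (u ++ v.map (· + maxL u)) := by
  set j := maxL u with hj
  intro x hx
  rcases List.mem_append.mp hx with hxu | hxv
  · refine ⟨(hu x hxu).1, fun i hi1 hix => List.mem_append.mpr (Or.inl ((hu x hxu).2 i hi1 hix))⟩
  · rcases List.mem_map.mp hxv with ⟨y, hy, rfl⟩
    have hy1 : 1 ≤ y := (hv y hy).1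
    refine ⟨by omega, fun i hi1 hix => ?_⟩
    rcases le_or_gt i j with h | h
    · exact List.mem_append.mpr (Or.inl ((hu j (maxL_mem hne)).2 i hi1 h))
    · have : i - j ∈ v := (hv y hy).2 (i - j) (by omega) (by omega)
      exact List.mem_append.mpr (Or.inr (List.mem_map.mpr ⟨i - j, this, by omega⟩))

lemma splits_append {u v : List ℕ} (hv : IsPacked v) :
    Splits (u ++ v.map (· + maxL u)) u.length := by
  intro x hx y hy
  rw [List.take_left] at hx
  rw [List.drop_left] at hy
  rcases List.mem_map.mp hy with ⟨z, hz, rfl⟩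
  have h1 := le_maxL hx
  have h2 := (hv z hz).1
  omega

abbrev PW (n : ℕ) := {w : List ℕ // w.length = n ∧ IsPacked w}
abbrev IPW (n : ℕ) := {w : List ℕ // w.length = n ∧ IsPacked w ∧ Irr w}


instance finiteIPW (n : ℕ) : Finite (IPW n) :=
  Finite.of_injective (fun w => (⟨w.1, w.2.1, w.2.2.1⟩ : PW n))
    (fun a b h => by
      dsimp only at h
      rw [Subtype.mk.injEq] at h
      exact Subtype.ext h)

lemma decomp_unique {u1 v1 u2 v2 : List ℕ} (hv1 : IsPacked v1)
    (hv2 : IsPacked v2) (hirr2 : Irr u2) (h1 : 1 ≤ u1.length)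
    (hlt : u1.length < u2.length)
    (heq : u1 ++ v1.map (· + maxL u1) = u2 ++ v2.map (· + maxL u2)) : False := by
  set w := u2 ++ v2.map (· + maxL u2) with hwdef
  have hsp1 : Splits w u1.length := heq ▸ splits_append hv1
  have hsp2 : Splits w u2.length := splits_append hv2
  have hlen2 : u2.length ≤ w.length := by simp [hwdef]
  have := (splits_take_iff (le_of_lt hlt) hlen2 hsp2).mp hsp1
  rw [hwdef, List.take_left] at this
  exact hirr2 u1.length h1 hlt this

noncomputable def B (n : ℕ) : ℕ := Nat.card (PW n)
noncomputable def C (n : ℕ) : ℕ := Nat.card (IPW n)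

def f (n : ℕ) : (Σ i : Fin (n + 1), IPW (i.1 + 1) × PW (n - i.1)) → PW (n + 1) :=
  fun ⟨i, u, v⟩ =>
    ⟨u.1 ++ v.1.map (· + maxL u.1),
     by
       have := u.2.1; have := v.2.1
       simp only [List.length_append, List.length_map, this, u.2.1]
       omega,
     packed_append u.2.2.1 v.2.2
       (by intro h; have := u.2.1; rw [h] at this; simp at this)⟩

lemma f_bijective (n : ℕ) : Function.Bijective (f n) := by
  classical
  constructor
  · rintro ⟨i1, u1, v1⟩ ⟨i2, u2, v2⟩ h
    have hw : u1.1 ++ v1.1.map (· + maxL u1.1) = u2.1 ++ v2.1.map (· + maxL u2.1) :=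
      congrArg Subtype.val h
    -- lengths of u's are equal
    have hl1 : u1.1.length = i1.1 + 1 := u1.2.1
    have hl2 : u2.1.length = i2.1 + 1 := u2.2.1
    have hlen : u1.1.length = u2.1.length := by
      rcases lt_trichotomy u1.1.length u2.1.length with h | h | h
      · exact absurd (decomp_unique v1.2.2 v2.2.2 u2.2.2.2 (by omega) h hw) not_false
      · exact h
      · exact absurd (decomp_unique v2.2.2 v1.2.2 u1.2.2.2 (by omega) h hw.symm) not_false
    obtain rfl : i1 = i2 := Fin.ext (by omega)
    obtain ⟨hu, hv⟩ := List.append_inj hw hlen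
    have hu' : u1 = u2 := Subtype.ext hu
    subst hu'
    have hv' : v1 = v2 := by
      apply Subtype.ext
      exact List.map_injective_iff.mpr (add_left_injective (maxL u1.1)) hv
    subst hv'
    rfl
  · rintro ⟨w, hlen, hpk⟩
    have hex : ∃ s, 1 ≤ s ∧ Splits w s :=
      ⟨n + 1, by omega, splits_length w (by omega)⟩
    set k := Nat.find hex with hkdef
    have hk1 : 1 ≤ k := (Nat.find_spec hex).1
    have hsp : Splits w k := (Nat.find_spec hex).2
    have hkle : k ≤ n + 1 := Nat.find_min' hex ⟨by omega, splits_length w (by omega)⟩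
    refine ⟨⟨⟨k - 1, by omega⟩,
      ⟨w.take k, by simp [hlen]; omega, packed_take hpk hsp, ?_⟩,
      ⟨(w.drop k).map (· - maxL (w.take k)), by simp [hlen]; omega, packed_drop hpk hsp⟩⟩, ?_⟩
    · intro s hs1 hs2 hsps
      have hsw : Splits w s := by
        rw [splits_take_iff (by simp [hlen] at hs2 ⊢; omega) (by omega) hsp]
        exact hsps
      exact Nat.find_min hex (by simp [hlen] at hs2; omega) ⟨hs1, hsw⟩
    · exact Subtype.ext (recompose hpk hsp)

lemma B_zero : B 0 = 1 := by
  have : Unique (PW 0) :=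
    { default := ⟨[], rfl, by intro x hx; simp at hx⟩
      uniq := by
        rintro ⟨w, hw, hp⟩
        exact Subtype.ext (List.eq_nil_of_length_eq_zero hw) }
  exact Nat.card_unique

lemma B_rec (n : ℕ) : B (n + 1) = ∑ i ∈ Finset.range (n + 1), C (i + 1) * B (n - i) := by
  classical
  letI : ∀ i : Fin (n + 1), Fintype (IPW (i.1 + 1) × PW (n - i.1)) := fun i => Fintype.ofFinite _
  have h2 : Nat.card (Σ i : Fin (n + 1), IPW (i.1 + 1) × PW (n - i.1)) =
      ∑ i : Fin (n + 1), C (i.1 + 1) * B (n - i.1) := by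
    rw [Nat.card_eq_fintype_card, Fintype.card_sigma]
    refine Finset.sum_congr rfl fun i _ => ?_
    rw [← Nat.card_eq_fintype_card, Nat.card_prod]
    rfl
  rw [B, ← Nat.card_eq_of_bijective (f n) (f_bijective n), h2,
    Fin.sum_univ_eq_sum_range (fun j => C (j + 1) * B (n - j))]

noncomputable def g : ℕ → ℕ := fun n => if n = 0 then 0 else C n

theorem main :
    ∃ g : ℕ → ℕ,
      PowerSeries.mk (fun n => (g n : ℚ)) =
        1 - (PowerSeries.mk (fun n => (B n : ℚ)))⁻¹ := by
  refine ⟨g, ?_⟩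
  set F := PowerSeries.mk (fun n => (B n : ℚ)) with hF
  set G := PowerSeries.mk (fun n => (g n : ℚ)) with hG
  have hc : PowerSeries.constantCoeff F ≠ 0 := by
    simp [hF, PowerSeries.constantCoeff_mk, B_zero]
  have hmul : (1 - G) * F = 1 := by
    ext n
    rw [sub_mul, one_mul]
    rw [map_sub, PowerSeries.coeff_mul]
    simp only [hF, hG, PowerSeries.coeff_mk]
    rw [Finset.Nat.sum_antidiagonal_eq_sum_range_succ_mk]
    cases n with
    | zero => simp [B_zero, g]
    | succ m =>
      have hg0 : g 0 = 0 := rfl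
      have hgs : ∀ i : ℕ, g (i + 1) = C (i + 1) := fun i => rfl
      rw [Finset.sum_range_succ']
      simp only [hgs, hg0, Nat.cast_zero, zero_mul, add_zero, Nat.succ_sub_succ]
      rw [PowerSeries.coeff_one, if_neg (Nat.succ_ne_zero m), B_rec m]
      push_cast
      ring
  have hinv : (1 - G) = F⁻¹ := (PowerSeries.eq_inv_iff_mul_eq_one hc).mpr hmul
  rw [← hinv]
  ring

end FG

/-- The coefficients of `1 - OB(t)⁻¹`, where `OB(t)` is the generating series
of the ordered Bell numbers (numbers of packed words), are nonnegative
integers: they count the generators of `WQSym` as a free associative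
algebra. -/
theorem free_generators_nonneg :
    ∃ g : ℕ → ℕ,
      PowerSeries.mk (fun n => (g n : ℚ)) =
        1 - (PowerSeries.mk
          (fun n => (Nat.card {w : List ℕ // w.length = n ∧ IsPacked w} : ℚ)))⁻¹ := by
  exact FG.main
end

section
/- Let two maximally unpacked parking functions b', b'' of lengths p, q be given (a parking function b is maximally unpacked if it is the lexicographically greatest parking function with its packed word). Then every word in the shifted shuffle b' ⧢ b''[p] is again a maximally unpacked parking function. -/
/-- A parking function of length `n`: a word over `{1,…,n}` whose increasing
rearrangement `c₁ ≤ … ≤ c_n` satisfies `c_i ≤ i`; equivalently, all letters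
are positive and for each `k ≤ n` at least `k` letters are `≤ k`. -/
def IsPF (w : List ℕ) : Prop :=
  (∀ x ∈ w, 1 ≤ x) ∧ ∀ k, k ≤ w.length → k ≤ (w.filter (fun x => x ≤ k)).length

/-- A parking function is maximally unpacked if it is the lexicographically
greatest parking function with its packed word. -/
def MaxUnpacked (b : List ℕ) : Prop :=
  IsPF b ∧ ∀ c : List ℕ, IsPF c → pack c = pack b → ¬ List.Lex (· < ·) b c

/-! ### Auxiliary machinery -/

/-- Number of letters of `l` that are strictly less than `x` (with multiplicity). -/
def cntlt (l : List ℕ) (x : ℕ) : ℕ := l.countP (fun a => a < x)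

/-- Number of distinct letters of `l` strictly less than `x`. -/
def rk (l : List ℕ) (x : ℕ) : ℕ := (l.toFinset.sort (· ≤ ·)).countP (fun a => a < x)

/-- The key characterization predicate: every letter `x` exceeds exactly `x - 1`
letters of the word. -/
def MU (b : List ℕ) : Prop := ∀ x ∈ b, cntlt b x + 1 = x

/-- indexOf in a strictly sorted list equals the number of smaller elements. -/
theorem indexOf_sorted_lt (s : List ℕ) (hs : List.Pairwise (· < ·) s) (x : ℕ) (hx : x ∈ s) :
    s.idxOf x = s.countP (fun a => a < x) := by
  induction s with
  | nil => cases hx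
  | cons a t ih =>
    rw [List.pairwise_cons] at hs
    rcases List.mem_cons.mp hx with rfl | hxt
    · rw [List.idxOf_cons_self, List.countP_cons]
      simp only [decide_eq_true_eq, lt_self_iff_false, if_false, add_zero]
      symm
      rw [List.countP_eq_zero]
      intro b hb
      simp only [decide_eq_true_eq]
      exact not_lt.mpr (le_of_lt (hs.1 b hb))
    · have hax : a ≠ x := by intro h; subst h; exact absurd (hs.1 a hxt) (lt_irrefl a)
      rw [List.idxOf_cons_ne t hax, List.countP_cons, ih hs.2 hxt]
      simp [hs.1 x hxt]

theorem pack_eq_map_rk (l : List ℕ) : pack l = l.map (fun x => rk l x + 1) := by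
  unfold pack rk
  apply List.map_congr_left
  intro x hx
  rw [indexOf_sorted_lt _ ((List.sortedLT_iff_pairwise.mp (Finset.sortedLT_sort _))) x
    ((Finset.mem_sort _).mpr (List.mem_toFinset.mpr hx))]

theorem rk_lt_iff (l : List ℕ) (x y : ℕ) (hx : x ∈ l) (hy : y ∈ l) :
    x < y ↔ rk l x < rk l y := by
  set s := l.toFinset.sort (· ≤ ·) with hsdef
  have hxs : x ∈ s := (Finset.mem_sort _).mpr (List.mem_toFinset.mpr hx)
  have hys : y ∈ s := (Finset.mem_sort _).mpr (List.mem_toFinset.mpr hy)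
  have hsort : List.Pairwise (· < ·) s := (List.sortedLT_iff_pairwise.mp (Finset.sortedLT_sort _))
  have hx' : rk l x = s.idxOf x := (indexOf_sorted_lt s hsort x hxs).symm
  have hy' : rk l y = s.idxOf y := (indexOf_sorted_lt s hsort y hys).symm
  have hix : s.idxOf x < s.length := List.idxOf_lt_length_iff.mpr hxs
  have hiy : s.idxOf y < s.length := List.idxOf_lt_length_iff.mpr hys
  have hgx : s.get ⟨s.idxOf x, hix⟩ = x := List.getElem_idxOf hix
  have hgy : s.get ⟨s.idxOf y, hiy⟩ = y := List.getElem_idxOf hiy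
  have key := (List.sortedLT_iff_pairwise.mpr hsort).strictMono_get.lt_iff_lt
    (a := ⟨s.idxOf x, hix⟩) (b := ⟨s.idxOf y, hiy⟩)
  rw [hgx, hgy] at key
  rw [hx', hy']; rw [key, Fin.mk_lt_mk]

/-- `cntlt` of a letter only depends on the packed word (via ranks). -/
theorem cntlt_eq_pack_countP (b : List ℕ) (x : ℕ) (hx : x ∈ b) :
    cntlt b x = (pack b).countP (fun t => t < rk b x + 1) := by
  rw [pack_eq_map_rk, List.countP_map]
  unfold cntlt
  apply List.countP_congr
  intro a ha
  simp only [Function.comp_apply, decide_eq_true_eq]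
  rw [rk_lt_iff b a x ha hx]
  omega

/-- disjoint counting -/
theorem countP_disj_le (l : List ℕ) (p q r : ℕ → Bool)
    (hpq : ∀ a ∈ l, ¬(p a = true ∧ q a = true))
    (h : ∀ a ∈ l, (p a = true → r a = true) ∧ (q a = true → r a = true)) :
    l.countP p + l.countP q ≤ l.countP r := by
  induction l with
  | nil => simp [List.countP_nil]
  | cons a t ih =>
    have ht := ih (fun a ha => hpq a (List.mem_cons_of_mem _ ha))
      (fun a ha => h a (List.mem_cons_of_mem _ ha))
    have hpqa := hpq a List.mem_cons_self
    have ha := h a List.mem_cons_self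
    rw [List.countP_cons, List.countP_cons, List.countP_cons]
    by_cases hp : p a = true <;> by_cases hq : q a = true <;>
      simp [hp, hq, ha.1, ha.2] at hpqa ⊢ <;> omega

theorem mem_le_length_of_pf (c : List ℕ) (hc : IsPF c) : ∀ x ∈ c, x ≤ c.length := by
  intro x hx
  have h := hc.2 c.length (le_refl _)
  rw [← List.countP_eq_length_filter] at h
  have h2 : c.countP (fun a => a ≤ c.length) ≤ c.length := List.countP_le_length
  have h3 : c.countP (fun a => a ≤ c.length) = c.length := le_antisymm h2 h
  have := List.countP_eq_length.mp h3 x hx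
  simpa using this

theorem pf_le_cntlt (c : List ℕ) (hc : IsPF c) : ∀ x ∈ c, x ≤ cntlt c x + 1 := by
  intro x hx
  have hx1 : 1 ≤ x := hc.1 x hx
  have hxlen : x ≤ c.length := mem_le_length_of_pf c hc x hx
  have h := hc.2 (x - 1) (by omega)
  rw [← List.countP_eq_length_filter] at h
  have he : c.countP (fun a => a ≤ x - 1) = cntlt c x := by
    apply List.countP_congr
    intro a _
    simp only [decide_eq_true_eq]
    omega
  rw [he] at h
  omega

theorem not_lex_of_le : ∀ (b c : List ℕ), b.length = c.length →
    (∀ i (hb : i < b.length) (hc : i < c.length), c.get ⟨i, hc⟩ ≤ b.get ⟨i, hb⟩) →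
    ¬ List.Lex (· < ·) b c := by
  intro b
  induction b with
  | nil =>
    intro c hlen _ hlex
    cases c with
    | nil => cases hlex
    | cons y t => simp at hlen
  | cons a s ih =>
    intro c hlen hle hlex
    cases c with
    | nil => cases hlex
    | cons y t =>
      cases hlex with
      | rel h =>
        have h0 := hle 0 (by simp) (by simp)
        simp at h0
        omega
      | cons h =>
        exact ih t (by simpa using hlen)
          (fun i hi hi' => by
            have := hle (i + 1) (by simpa using Nat.succ_lt_succ hi)
              (by simpa using Nat.succ_lt_succ hi')
            simpa using this) h

theorem sort_toFinset_map (b : List ℕ) (f : ℕ → ℕ)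
    (hf : ∀ x ∈ b, ∀ y ∈ b, x < y → f x < f y) :
    ((b.map f).toFinset).sort (· ≤ ·) = (b.toFinset.sort (· ≤ ·)).map f := by
  set s := b.toFinset.sort (· ≤ ·) with hs
  have hmems : ∀ a, a ∈ s ↔ a ∈ b := by
    intro a; rw [hs, Finset.mem_sort, List.mem_toFinset]
  have hsort : List.Pairwise (· < ·) s := (List.sortedLT_iff_pairwise.mp (Finset.sortedLT_sort _))
  have hsortmap : List.Pairwise (· < ·) (s.map f) := by
    apply List.Pairwise.map
    exact fun a b h => h
    apply List.Pairwise.imp_of_mem _ hsort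
    intro a c ha hc hac
    exact hf a ((hmems a).mp ha) c ((hmems c).mp hc) hac
  have hnodupmap : (s.map f).Nodup := hsortmap.nodup
  have hnoduptgt : (((b.map f).toFinset).sort (· ≤ ·)).Nodup := Finset.sort_nodup _ _
  have hperm : List.Perm (((b.map f).toFinset).sort (· ≤ ·)) (s.map f) := by
    apply List.perm_of_nodup_nodup_toFinset_eq hnoduptgt hnodupmap
    apply Finset.ext
    intro a
    simp only [List.mem_toFinset, List.mem_map]
    rw [Finset.mem_sort, List.mem_toFinset, List.mem_map]
    constructor
    · rintro ⟨x, hx, rfl⟩; exact ⟨x, (hmems x).mpr hx, rfl⟩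
    · rintro ⟨x, hx, rfl⟩; exact ⟨x, (hmems x).mp hx, rfl⟩
  exact hperm.eq_of_pairwise' (Finset.pairwise_sort _ _) (hsortmap.imp le_of_lt)

theorem rk_map (b : List ℕ) (f : ℕ → ℕ)
    (hf : ∀ x ∈ b, ∀ y ∈ b, x < y → f x < f y) (x : ℕ) (hx : x ∈ b) :
    rk (b.map f) (f x) = rk b x := by
  unfold rk
  rw [sort_toFinset_map b f hf, List.countP_map]
  apply List.countP_congr
  intro a ha
  have hab : a ∈ b := List.mem_toFinset.mp ((Finset.mem_sort _).mp ha)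
  simp only [Function.comp_apply, decide_eq_true_eq]
  constructor
  · intro h
    by_contra hc
    rcases Nat.lt_or_ge a x with h2 | h2
    · exact hc h2
    · rcases Nat.eq_or_lt_of_le h2 with rfl | h3
      · exact lt_irrefl _ h
      · exact absurd (hf x hx a hab h3) (by omega)
  · exact hf a hab x hx

/-- `MU` implies the parking function property. -/
theorem MU_isPF (b : List ℕ) (hb : MU b) : IsPF b := by
  constructor
  · intro x hx
    have := hb x hx
    omega
  · intro k hk
    rw [← List.countP_eq_length_filter]
    induction k with
    | zero => exact Nat.zero_le _
    | succ k ih =>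
      have ihk : k ≤ b.countP (fun a => a ≤ k) := ih (by omega)
      by_contra hcon
      push_neg at hcon
      have hmono : b.countP (fun a => a ≤ k) ≤ b.countP (fun a => a ≤ k + 1) := by
        apply List.countP_mono_left
        intro a _ h
        simp only [decide_eq_true_eq] at h ⊢
        omega
      have heq : b.countP (fun a => a ≤ k) = k ∧ b.countP (fun a => a ≤ k + 1) = k := by omega
      -- there exists an element > k + 1
      have hex : ∃ a ∈ b, k + 1 < a := by
        by_contra hno
        push_neg at hno
        have : b.countP (fun a => a ≤ k + 1) = b.length :=
          List.countP_eq_length.mpr (fun a ha => by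
            simp only [decide_eq_true_eq]; exact hno a ha)
        omega
      obtain ⟨a0, ha0, ha0k⟩ := hex
      -- minimal element of b greater than k
      have hTne : (b.toFinset.filter (fun a => k < a)).Nonempty :=
        ⟨a0, Finset.mem_filter.mpr ⟨List.mem_toFinset.mpr ha0, by omega⟩⟩
      set m := (b.toFinset.filter (fun a => k < a)).min' hTne with hm
      have hmmem : m ∈ b.toFinset.filter (fun a => k < a) := Finset.min'_mem _ hTne
      have hmb : m ∈ b := List.mem_toFinset.mp (Finset.mem_filter.mp hmmem).1
      have hmk : k < m := (Finset.mem_filter.mp hmmem).2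
      have hmmin : ∀ u ∈ b, k < u → m ≤ u := by
        intro u hu hku
        exact Finset.min'_le _ u (Finset.mem_filter.mpr ⟨List.mem_toFinset.mpr hu, hku⟩)
      have hcnt : cntlt b m = b.countP (fun a => a ≤ k) := by
        apply List.countP_congr
        intro a ha
        simp only [decide_eq_true_eq]
        constructor
        · intro h
          by_contra hc
          push_neg at hc
          exact absurd (hmmin a ha hc) (by omega)
        · intro h; omega
      have hmval : m = k + 1 := by
        have := hb m hmb
        omega
      -- but then countP (≤ k+1) ≥ k + 1
      have hone : 1 ≤ b.countP (fun a => a = k + 1) := by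
        rw [Nat.succ_le_iff, List.countP_pos_iff]
        exact ⟨m, hmb, by simp [hmval]⟩
      have := countP_disj_le b (fun a => a ≤ k) (fun a => a = k + 1) (fun a => a ≤ k + 1)
        (fun a _ => by simp only [decide_eq_true_eq]; omega)
        (fun a _ => by constructor <;> (simp only [decide_eq_true_eq]; omega))
      omega

theorem pack_length (l : List ℕ) : (pack l).length = l.length := by
  unfold pack; rw [List.length_map]

/-- `MU` implies maximal unpackedness. -/
theorem MU_maxUnpacked (b : List ℕ) (hb : MU b) : MaxUnpacked b := by
  refine ⟨MU_isPF b hb, ?_⟩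
  intro c hc hpack
  have hlen : c.length = b.length := by
    rw [← pack_length c, ← pack_length b, hpack]
  apply not_lex_of_le b c hlen.symm
  intro i hib hic
  set x := b.get ⟨i, hib⟩ with hx
  set y := c.get ⟨i, hic⟩ with hy
  have hxb : x ∈ b := List.get_mem b ⟨i, hib⟩
  have hyc : y ∈ c := List.get_mem c ⟨i, hic⟩
  have hpc : i < (pack c).length := by rw [pack_length]; exact hic
  have hpb : i < (pack b).length := by rw [pack_length]; exact hib
  -- ranks agree pointwise
  have e0 := List.get_of_eq hpack ⟨i, hpc⟩
  have e1 := List.get_of_eq (pack_eq_map_rk c) ⟨i, hpc⟩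
  have e2 := List.get_of_eq (pack_eq_map_rk b) ⟨i, hpb⟩
  simp only [List.get_eq_getElem, List.getElem_map] at e0 e1 e2
  have hrk : rk c y = rk b x := by
    have : rk c y + 1 = rk b x + 1 := by
      rw [show rk c y + 1 = (pack c)[i] from e1.symm, show rk b x + 1 = (pack b)[i] from e2.symm]
      rw [e0]
    omega
  have hcnt : cntlt c y = cntlt b x := by
    rw [cntlt_eq_pack_countP c y hyc, cntlt_eq_pack_countP b x hxb, hpack, hrk]
  have h1 : y ≤ cntlt c y + 1 := pf_le_cntlt c hc y hyc
  have h2 : cntlt b x + 1 = x := hb x hxb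
  omega

theorem lex_map_bump (f : ℕ → ℕ) (v : ℕ) (hfv : v < f v) (hfne : ∀ a, a ≠ v → f a = a) :
    ∀ l : List ℕ, v ∈ l → List.Lex (· < ·) l (l.map f) := by
  intro l
  induction l with
  | nil => intro h; cases h
  | cons a t ih =>
    intro hv
    by_cases hav : a = v
    · subst hav
      rw [List.map_cons]
      exact List.Lex.rel hfv
    · rw [List.map_cons, hfne a hav]
      have hvt : v ∈ t := by
        rcases List.mem_cons.mp hv with h | h
        · exact absurd h.symm hav
        · exact h
      exact List.Lex.cons (ih hvt)

/-- Maximal unpackedness implies `MU`. -/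
theorem maxUnpacked_MU (b : List ℕ) (hb : MaxUnpacked b) : MU b := by
  intro x hx
  by_contra hne
  -- the largest "deficient" letter v
  have hSne : (b.toFinset.filter (fun a => cntlt b a + 1 ≠ a)).Nonempty :=
    ⟨x, Finset.mem_filter.mpr ⟨List.mem_toFinset.mpr hx, hne⟩⟩
  set v := (b.toFinset.filter (fun a => cntlt b a + 1 ≠ a)).max' hSne with hvdef
  have hvmem : v ∈ b.toFinset.filter (fun a => cntlt b a + 1 ≠ a) := Finset.max'_mem _ hSne
  have hvb : v ∈ b := List.mem_toFinset.mp (Finset.mem_filter.mp hvmem).1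
  have hvne : cntlt b v + 1 ≠ v := (Finset.mem_filter.mp hvmem).2
  have hvmax : ∀ u ∈ b, cntlt b u + 1 ≠ u → u ≤ v := by
    intro u hu hune
    exact Finset.le_max' (b.toFinset.filter (fun a => cntlt b a + 1 ≠ a)) u
      (Finset.mem_filter.mpr ⟨List.mem_toFinset.mpr hu, hune⟩)
  set v' := cntlt b v + 1 with hv'def
  have hvlt : v < v' := by
    have := pf_le_cntlt b hb.1 v hvb
    omega
  -- letters above v are strictly above v'
  have hgap : ∀ u ∈ b, v < u → v' < u := by
    intro u hu hvu
    have hue : cntlt b u + 1 = u := by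
      by_contra h
      exact absurd (hvmax u hu h) (by omega)
    have hone : 1 ≤ b.countP (fun a => a = v) := by
      rw [Nat.succ_le_iff, List.countP_pos_iff]
      exact ⟨v, hvb, by simp⟩
    have hdisj := countP_disj_le b (fun a => a < v) (fun a => a = v) (fun a => a < u)
      (fun a _ => by simp only [decide_eq_true_eq]; omega)
      (fun a _ => by constructor <;> (simp only [decide_eq_true_eq]; omega))
    have h2 : cntlt b v = b.countP (fun a => a < v) := rfl
    have h3 : cntlt b u = b.countP (fun a => a < u) := rfl
    omega
  -- the bumping function
  set f : ℕ → ℕ := fun a => if a = v then v' else a with hfdef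
  have hfv : f v = v' := by simp [hfdef]
  have hfne : ∀ a, a ≠ v → f a = a := by intro a ha; simp [hfdef, ha]
  have hmono : ∀ a ∈ b, ∀ u ∈ b, a < u → f a < f u := by
    intro a ha u hu hau
    by_cases hav : a = v
    · subst hav
      have huv : u ≠ v := by omega
      rw [hfv, hfne u huv]
      exact hgap u hu hau
    · rw [hfne a hav]
      by_cases huv : u = v
      · subst huv; rw [hfv]; omega
      · rw [hfne u huv]; exact hau
  set c := b.map f with hcdef
  -- pack is preserved
  have hpack : pack c = pack b := by
    rw [pack_eq_map_rk, pack_eq_map_rk, hcdef, List.map_map]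
    apply List.map_congr_left
    intro a ha
    simp only [Function.comp_apply]
    rw [rk_map b f hmono a ha]
  -- c is a parking function
  have hcpf : IsPF c := by
    constructor
    · intro z hz
      rw [hcdef] at hz
      obtain ⟨a, ha, rfl⟩ := List.mem_map.mp hz
      by_cases hav : a = v
      · subst hav; rw [hfv]; omega
      · rw [hfne a hav]; exact hb.1.1 a ha
    · intro k hk
      rw [← List.countP_eq_length_filter, hcdef, List.countP_map]
      have hklen : k ≤ b.length := by rwa [hcdef, List.length_map] at hk
      rcases le_or_gt v' k with hv'k | hkv'
      · -- k ≥ v'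
        have : List.countP ((fun x => decide (x ≤ k)) ∘ f) b = b.countP (fun a => a ≤ k) := by
          apply List.countP_congr
          intro a ha
          simp only [Function.comp_apply, decide_eq_true_eq]
          by_cases hav : a = v
          · subst hav; rw [hfv]; omega
          · rw [hfne a hav]
        rw [this]
        have := hb.1.2 k hklen
        rwa [← List.countP_eq_length_filter] at this
      · rcases lt_or_ge k v with hkv | hvk
        · -- k < v
          have : List.countP ((fun x => decide (x ≤ k)) ∘ f) b = b.countP (fun a => a ≤ k) := by
            apply List.countP_congr
            intro a ha
            simp only [Function.comp_apply, decide_eq_true_eq]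
            by_cases hav : a = v
            · subst hav; rw [hfv]; omega
            · rw [hfne a hav]
          rw [this]
          have := hb.1.2 k hklen
          rwa [← List.countP_eq_length_filter] at this
        · -- v ≤ k < v'
          have : List.countP ((fun x => decide (x ≤ k)) ∘ f) b = b.countP (fun a => a < v) := by
            apply List.countP_congr
            intro a ha
            simp only [Function.comp_apply, decide_eq_true_eq]
            by_cases hav : a = v
            · subst hav; rw [hfv]; omega
            · rw [hfne a hav]
              constructor
              · intro hak
                rcases Nat.lt_or_ge a v with h | h
                · exact h
                · have : v < a := by omega
                  have := hgap a ha this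
                  omega
              · intro h; omega
          rw [this]
          have : b.countP (fun a => a < v) = v' - 1 := by rw [hv'def]; rfl
          omega
  -- b is lexicographically smaller than c
  have hlex : List.Lex (· < ·) b c := by
    rw [hcdef]
    exact lex_map_bump f v (by rw [hfv]; exact hvlt) hfne b hvb
  exact hb.2 c hcpf hpack hlex

theorem shuffle_countP {u v w : List ℕ} (hs : IsShuffle u v w) (p : ℕ → Bool) :
    w.countP p = u.countP p + v.countP p := by
  induction hs with
  | nil => simp
  | left x u v w h ih => rw [List.countP_cons, List.countP_cons]; omega
  | right x u v w h ih => rw [List.countP_cons, List.countP_cons]; omega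

theorem shuffle_mem {u v w : List ℕ} (hs : IsShuffle u v w) (x : ℕ) :
    x ∈ w ↔ x ∈ u ∨ x ∈ v := by
  induction hs with
  | nil => simp
  | left y u v w h ih => simp only [List.mem_cons, ih]; tauto
  | right y u v w h ih => simp only [List.mem_cons, ih]; tauto

/-- Every word in the shifted shuffle of two maximally unpacked parking
functions is again a maximally unpacked parking function. -/
theorem shifted_shuffle_maxUnpacked (b' b'' : List ℕ)
    (h' : MaxUnpacked b') (h'' : MaxUnpacked b'') (w : List ℕ)
    (hs : IsShuffle b' (b''.map (· + b'.length)) w) :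
    MaxUnpacked w := by
  set p := b'.length with hp
  have hMU' : MU b' := maxUnpacked_MU b' h'
  have hMU'' : MU b'' := maxUnpacked_MU b'' h''
  apply MU_maxUnpacked
  intro x hx
  have hcnt : cntlt w x = cntlt b' x + (b''.map (· + p)).countP (fun a => a < x) :=
    shuffle_countP hs _
  rcases (shuffle_mem hs x).mp hx with hxb | hxb
  · -- x comes from b'
    have hxe : cntlt b' x + 1 = x := hMU' x hxb
    have hxle : cntlt b' x < p := by
      have h1 : b'.countP (fun a => a < x) ≤ b'.length := List.countP_le_length
      have h2 : b'.countP (fun a => a < x) ≠ b'.length := by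
        intro h
        have := List.countP_eq_length.mp h x hxb
        simp at this
      have : cntlt b' x = b'.countP (fun a => a < x) := rfl
      omega
    have hzero : (b''.map (· + p)).countP (fun a => a < x) = 0 := by
      rw [List.countP_eq_zero]
      intro a ha
      obtain ⟨y, hy, rfl⟩ := List.mem_map.mp ha
      simp only [decide_eq_true_eq]
      omega
    omega
  · -- x comes from the shifted b''
    obtain ⟨y, hy, rfl⟩ := List.mem_map.mp hxb
    have hye : cntlt b'' y + 1 = y := hMU'' y hy
    have hy1 : 1 ≤ y := h''.1.1 y hy
    have hfirst : cntlt b' (y + p) = p := by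
      apply List.countP_eq_length.mpr
      intro a ha
      simp only [decide_eq_true_eq]
      have := mem_le_length_of_pf b' h'.1 a ha
      omega
    have hsecond : (b''.map (· + p)).countP (fun a => a < y + p) = cntlt b'' y := by
      rw [List.countP_map]
      apply List.countP_congr
      intro a _
      simp only [Function.comp_apply, decide_eq_true_eq]
      omega
    have : cntlt w (y + p) = cntlt b' (y + p) + (b''.map (· + p)).countP (fun a => a < y + p) :=
      shuffle_countP hs _
    omega
end
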